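/- arXiv:2402.00012 — 3 statements merged into one kernel-verified Lean document; each statement's English description precedes it below -/
import Mathlib

section
/- Let G be a finite group, p a prime, H a subgroup of G, and N a normal subgroup of G. If H is a p-CAP-subgroup of G, then the image HN/N is a p-CAP-subgroup of the quotient group G/N. -/
/-- `U/V` is a chief factor of `G`: both normal in `G`, `V < U`, and no normal
subgroup of `G` lies strictly between them. -/
def IsChiefFactor (G : Type*) [Group G] (V U : Subgroup G) : Prop :=
  V.Normal ∧ U.Normal ∧ V < U ∧
    ∀ W : Subgroup G, W.Normal → V < W → W < U → False

/-- `A` covers (`A ⊔ U = A ⊔ V`) or avoids (`A ⊓ U = A ⊓ V`) the factor `U/V`. -/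
def CoversOrAvoids {G : Type*} [Group G] (A V U : Subgroup G) : Prop :=
  A ⊔ U = A ⊔ V ∨ A ⊓ U = A ⊓ V

/-- `A` is a `p`-CAP-subgroup of `G`: it covers or avoids every chief factor of `G`
whose order (`V.relindex U = |U/V|`) is divisible by `p`. -/
def IsPCAPSubgroup {G : Type*} [Group G] (p : ℕ) (A : Subgroup G) : Prop :=
  ∀ V U : Subgroup G, IsChiefFactor G V U → p ∣ V.relIndex U → CoversOrAvoids A V U

/-- `A` is a strong `p`-CAP-subgroup of `G`: `A` is a `p`-CAP-subgroup of every
subgroup of `G` containing `A`. -/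
def IsStrongPCAPSubgroup {G : Type*} [Group G] (p : ℕ) (A : Subgroup G) : Prop :=
  ∀ K : Subgroup G, A ≤ K → IsPCAPSubgroup p (A.subgroupOf K)

/-- `A` is a CAP-subgroup of `G`: it covers or avoids every chief factor of `G`. -/
def IsCAPSubgroup {G : Type*} [Group G] (A : Subgroup G) : Prop :=
  ∀ V U : Subgroup G, IsChiefFactor G V U → CoversOrAvoids A V U

/-!
Chief factors of a quotient `Q` of `G` pull back to chief factors of `G` of the same order,
because subgroups of `Q` correspond to subgroups of `G` containing the kernel. Covering and
avoiding a pulled-back factor then push forward along the surjection.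
-/

namespace Subgroup

variable {G Q : Type*} [Group G] [Group Q]

theorem map_inf_comap (f : G →* Q) (H : Subgroup G) (K : Subgroup Q) :
    (H ⊓ K.comap f).map f = H.map f ⊓ K :=
  SetLike.coe_injective <| by
    simp only [coe_map, coe_inf, coe_comap, Set.image_inter_preimage]

end Subgroup

section Surjective

variable {G Q : Type*} [Group G] [Group Q] {f : G →* Q}

open Subgroup

theorem IsChiefFactor.comap_of_surjective (hf : Function.Surjective f) {V U : Subgroup Q}
    (h : IsChiefFactor Q V U) : IsChiefFactor G (V.comap f) (U.comap f) := by
  obtain ⟨hV, hU, hVU, hmax⟩ := h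
  refine ⟨hV.comap f, hU.comap f, (comap_lt_comap_of_surjective hf).2 hVU, ?_⟩
  intro W hW hVW hWU
  have hW_eq : (W.map f).comap f = W := comap_map_eq_self ((ker_le_comap f V).trans hVW.le)
  refine hmax (W.map f) (hW.map f hf) ?_ ?_
  · rwa [← comap_lt_comap_of_surjective hf, hW_eq]
  · rwa [← comap_lt_comap_of_surjective hf, hW_eq]

theorem CoversOrAvoids.map_of_surjective (hf : Function.Surjective f) {A : Subgroup G}
    {V U : Subgroup Q} (h : CoversOrAvoids A (V.comap f) (U.comap f)) :
    CoversOrAvoids (A.map f) V U := by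
  rcases h with hcover | havoid
  · left
    simpa only [Subgroup.map_sup, map_comap_eq_self_of_surjective hf] using congrArg (map f) hcover
  · right
    rw [← map_inf_comap, ← map_inf_comap, havoid]

theorem IsPCAPSubgroup.map_of_surjective (hf : Function.Surjective f) {p : ℕ}
    {A : Subgroup G} (hA : IsPCAPSubgroup p A) : IsPCAPSubgroup p (A.map f) := by
  intro V U hVU hp
  refine CoversOrAvoids.map_of_surjective hf (hA _ _ (hVU.comap_of_surjective hf) ?_)
  rwa [relIndex_comap, map_comap_eq_self_of_surjective hf]

end Surjective

theorem stmt_2_general {G : Type*} [Group G] (p : ℕ)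
    (H : Subgroup G) (N : Subgroup G) [N.Normal]
    (hH : IsPCAPSubgroup p H) :
    IsPCAPSubgroup p (H.map (QuotientGroup.mk' N)) :=
  hH.map_of_surjective (QuotientGroup.mk'_surjective N)

theorem stmt_2 {G : Type*} [Group G] [Finite G] (p : ℕ) (hp : p.Prime)
    (H : Subgroup G) (N : Subgroup G) [N.Normal]
    (hH : IsPCAPSubgroup p H) :
    IsPCAPSubgroup p (H.map (QuotientGroup.mk' N)) :=
  stmt_2_general p H N hH
end

section
/- Let G be a finite group, p a prime, H a subgroup of G, and N a normal subgroup of G. If H is a strong p-CAP-subgroup of G, then HN/N is a strong p-CAP-subgroup of G/N. -/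
/-!
Both CAP properties are transported along any surjective homomorphism `f : G →* G'`.
Chief factors `U/V` of `G'` pull back to chief factors of `G` of the same order, and
applying `f` to `A ⊔ f⁻¹U = A ⊔ f⁻¹V` or `A ⊓ f⁻¹U = A ⊓ f⁻¹V` gives the covering or
avoidance of `U/V` by `f A`. For the strong version, a subgroup `K ≥ f A` of `G'` is the
image of `f⁻¹K ≥ A`, and `f` restricts to a surjection `f⁻¹K → K` carrying `A` onto `f A`.
-/

open Function

namespace Subgroup

variable {G G' : Type*} [Group G] [Group G']

theorem map_inf_eq_map_inf_comap (f : G →* G') (A : Subgroup G) (B : Subgroup G') :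
    A.map f ⊓ B = (A ⊓ B.comap f).map f := by
  ext y
  constructor
  · rintro ⟨⟨x, hxA, rfl⟩, hyB⟩
    exact ⟨x, ⟨hxA, hyB⟩, rfl⟩
  · rintro ⟨x, ⟨hxA, hxB⟩, rfl⟩
    exact ⟨⟨x, hxA, rfl⟩, hxB⟩

theorem map_subgroupOf_comap_eq (f : G →* G') (A : Subgroup G) (K : Subgroup G') :
    (A.subgroupOf (K.comap f)).map (f.subgroupComap K) = (A.map f).subgroupOf K := by
  ext ⟨y, hyK⟩
  simp only [mem_map, mem_subgroupOf]
  constructor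
  · rintro ⟨x, hxA, hxy⟩
    exact ⟨x, hxA, congrArg Subtype.val hxy⟩
  · rintro ⟨x, hxA, rfl⟩
    exact ⟨⟨x, hyK⟩, hxA, rfl⟩

end Subgroup

section Surjective

variable {G G' : Type*} [Group G] [Group G'] {f : G →* G'}

theorem IsChiefFactor.comap (hf : Surjective f) {V U : Subgroup G'}
    (h : IsChiefFactor G' V U) : IsChiefFactor G (V.comap f) (U.comap f) := by
  obtain ⟨hV, hU, hVU, hmax⟩ := h
  refine ⟨hV.comap f, hU.comap f, (Subgroup.comap_lt_comap_of_surjective hf).2 hVU, ?_⟩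
  intro W hW hVW hWU
  have hWeq : (W.map f).comap f = W :=
    Subgroup.comap_map_eq_self ((Subgroup.ker_le_comap f V).trans hVW.le)
  rw [← hWeq, Subgroup.comap_lt_comap_of_surjective hf] at hVW hWU
  exact hmax _ (hW.map f hf) hVW hWU

theorem IsPCAPSubgroup.map (hf : Surjective f) {p : ℕ} {A : Subgroup G}
    (h : IsPCAPSubgroup p A) : IsPCAPSubgroup p (A.map f) := by
  intro V U hVU hp
  have hrel : (V.comap f).relIndex (U.comap f) = V.relIndex U := by
    rw [Subgroup.relIndex_comap, Subgroup.map_comap_eq_self_of_surjective hf]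
  rcases h _ _ (hVU.comap hf) (hrel ▸ hp) with hcov | havd
  · left
    simpa only [Subgroup.map_sup, Subgroup.map_comap_eq_self_of_surjective hf]
      using congrArg (Subgroup.map f) hcov
  · right
    simpa only [Subgroup.map_inf_eq_map_inf_comap] using congrArg (Subgroup.map f) havd

theorem IsStrongPCAPSubgroup.map (hf : Surjective f) {p : ℕ} {A : Subgroup G}
    (h : IsStrongPCAPSubgroup p A) : IsStrongPCAPSubgroup p (A.map f) := by
  intro K hAK
  rw [← Subgroup.map_subgroupOf_comap_eq]
  exact (h _ (Subgroup.map_le_iff_le_comap.1 hAK)).map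
    (f.subgroupComap_surjective_of_surjective K hf)

end Surjective

theorem stmt_3_general {G : Type*} [Group G] (p : ℕ)
    (H : Subgroup G) (N : Subgroup G) [N.Normal]
    (hH : IsStrongPCAPSubgroup p H) :
    IsStrongPCAPSubgroup p (H.map (QuotientGroup.mk' N)) :=
  hH.map (QuotientGroup.mk'_surjective N)

theorem stmt_3 {G : Type*} [Group G] [Finite G] (p : ℕ) (hp : p.Prime)
    (H : Subgroup G) (N : Subgroup G) [N.Normal]
    (hH : IsStrongPCAPSubgroup p H) :
    IsStrongPCAPSubgroup p (H.map (QuotientGroup.mk' N)) :=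
  stmt_3_general p H N hH
end

section
/- Let G be a finite group and P a normal 2-subgroup of G with |P| = 2^n, n > 1, and exp(P) ≤ 2. Suppose every subgroup of P of a fixed order d with 2 < d < 2^{n-1}, d | 2^n, is a strong 2-CAP-subgroup of G. Then P ≤ Z_𝔘(G), i.e., every G-chief factor below P has order 2. -/
open Subgroup in

lemma aux_mem_or_mem_mul {G : Type*} [Group G] {P H : Subgroup G}
    (hexp : ∀ a ∈ P, a ^ 2 = 1) (hHP : H ≤ P) {x : G} (hx : x ∈ P) {g : G}
    (hg : g ∈ H ⊔ Subgroup.zpowers x) : g ∈ H ∨ ∃ h ∈ H, g = h * x := by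
  have hinv : ∀ a ∈ P, a⁻¹ = a := by
    intro a ha
    have := hexp a ha
    rw [pow_two] at this
    exact inv_eq_of_mul_eq_one_right this
  have hcomm : ∀ a ∈ P, ∀ b ∈ P, a * b = b * a := by
    intro a ha b hb
    have h1 : (a * b)⁻¹ = a * b := hinv _ (mul_mem ha hb)
    conv_lhs => rw [← h1]
    rw [mul_inv_rev, hinv a ha, hinv b hb]
  have hxx : x * x = 1 := by have := hexp x hx; rwa [pow_two] at this
  let K : Subgroup G :=
  { carrier := ↑H ∪ (fun h => h * x) '' ↑H
    one_mem' := Or.inl H.one_mem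
    mul_mem' := by
      rintro a b (ha | ⟨h1, hh1, rfl⟩) (hb | ⟨h2, hh2, rfl⟩)
      · exact Or.inl (mul_mem ha hb)
      · exact Or.inr ⟨a * h2, mul_mem ha hh2, by dsimp only; rw [mul_assoc]⟩
      · refine Or.inr ⟨h1 * b, mul_mem hh1 hb, ?_⟩
        dsimp only
        rw [mul_assoc, mul_assoc, hcomm x hx b (hHP hb)]
      · refine Or.inl ?_
        dsimp only
        have : h1 * x * (h2 * x) = h1 * h2 * (x * x) := by
          rw [mul_assoc h1 x (h2 * x), ← mul_assoc x h2 x,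
            hcomm x hx h2 (hHP hh2), mul_assoc h2 x x, ← mul_assoc]
        rw [this, hxx, mul_one]
        exact mul_mem hh1 hh2
    inv_mem' := by
      rintro a (ha | ⟨h1, hh1, rfl⟩)
      · exact Or.inl (inv_mem ha)
      · refine Or.inr ⟨h1⁻¹, inv_mem hh1, ?_⟩
        dsimp only
        rw [mul_inv_rev, hinv x hx, hcomm x hx h1⁻¹ (hHP (inv_mem hh1))] }
  have hle : H ⊔ Subgroup.zpowers x ≤ K :=
    sup_le (fun a ha => Or.inl ha)
      (Subgroup.zpowers_le.mpr (Or.inr ⟨1, H.one_mem, by dsimp only; rw [one_mul]⟩))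
  rcases hle hg with hgH | ⟨h, hh, heq⟩
  · exact Or.inl hgH
  · dsimp only at heq
    exact Or.inr ⟨h, hh, heq.symm⟩

open Subgroup in
lemma aux_cap_of_top {G : Type*} [Group G] {A : Subgroup G}
    (hcap : IsPCAPSubgroup 2 (A.subgroupOf ⊤)) {V U : Subgroup G}
    (hCF : IsChiefFactor G V U) (hrel : 2 ∣ V.relIndex U) : CoversOrAvoids A V U := by
  obtain ⟨hVn, hUn, hlt, hmax⟩ := hCF
  have hsurj : Function.Surjective (⊤ : Subgroup G).subtype := fun g => ⟨⟨g, trivial⟩, rfl⟩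
  have hmapst : ∀ X : Subgroup G, (X.subgroupOf ⊤).map (⊤ : Subgroup G).subtype = X := by
    intro X
    rw [Subgroup.subgroupOf_map_subtype, inf_top_eq]
  have hcomapmap : ∀ W' : Subgroup ↥(⊤ : Subgroup G),
      ((W'.map (⊤ : Subgroup G).subtype).subgroupOf ⊤) = W' := fun W' =>
    Subgroup.comap_map_eq_self_of_injective (Subgroup.subtype_injective _) W'
  have hCF' : IsChiefFactor ↥(⊤ : Subgroup G) (V.subgroupOf ⊤) (U.subgroupOf ⊤) := by
    refine ⟨hVn.comap _, hUn.comap _, ?_, ?_⟩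
    · refine lt_of_le_of_ne (Subgroup.comap_mono hlt.le) fun hEq => hlt.ne ?_
      have := congrArg (Subgroup.map (⊤ : Subgroup G).subtype) hEq
      rwa [hmapst, hmapst] at this
    · intro W' hWn hVW hWU
      refine hmax (W'.map (⊤ : Subgroup G).subtype) (hWn.map _ hsurj) ?_ ?_
      · refine lt_of_le_of_ne ?_ fun hEq => hVW.ne ?_
        · have := Subgroup.map_mono (f := (⊤ : Subgroup G).subtype) hVW.le
          rwa [hmapst] at this
        · have := congrArg (fun X : Subgroup G => X.subgroupOf ⊤) hEq
          rwa [hcomapmap] at this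
      · refine lt_of_le_of_ne ?_ fun hEq => hWU.ne ?_
        · have := Subgroup.map_mono (f := (⊤ : Subgroup G).subtype) hWU.le
          rwa [hmapst] at this
        · have := congrArg (fun X : Subgroup G => X.subgroupOf ⊤) hEq
          rwa [hcomapmap] at this
  have hrel' : 2 ∣ (V.subgroupOf ⊤).relIndex (U.subgroupOf ⊤) := by
    rwa [Subgroup.relIndex_subgroupOf le_top]
  rcases hcap _ _ hCF' hrel' with hc | ha
  · left
    have : ((A ⊔ U).subgroupOf ⊤ : Subgroup ↥(⊤ : Subgroup G)) = (A ⊔ V).subgroupOf ⊤ := by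
      rw [Subgroup.subgroupOf_sup le_top le_top, Subgroup.subgroupOf_sup le_top le_top]
      exact hc
    have := congrArg (Subgroup.map (⊤ : Subgroup G).subtype) this
    rwa [hmapst, hmapst] at this
  · right
    have : ((A ⊓ U).subgroupOf ⊤ : Subgroup ↥(⊤ : Subgroup G)) = (A ⊓ V).subgroupOf ⊤ := by
      simp only [Subgroup.subgroupOf, Subgroup.comap_inf]
      exact ha
    have := congrArg (Subgroup.map (⊤ : Subgroup G).subtype) this
    rwa [hmapst, hmapst] at this

open Subgroup in
/-- card of a subgroup as ncard of two-part union bound -/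
lemma aux_card_le_two_mul {G : Type*} [Group G] [Finite G] {Q H : Subgroup G} {x : G}
    (hsub : ∀ g ∈ Q, g ∈ H ∨ ∃ h ∈ H, g = h * x) :
    Nat.card Q ≤ 2 * Nat.card H := by
  have hsub' : (Q : Set G) ⊆ (H : Set G) ∪ (fun h => h * x) '' (H : Set G) := by
    rintro g hg
    rcases hsub g hg with h1 | ⟨h, hh, rfl⟩
    · exact Or.inl h1
    · exact Or.inr ⟨h, hh, rfl⟩
  calc Nat.card Q = (Q : Set G).ncard := Nat.card_coe_set_eq _
  _ ≤ ((H : Set G) ∪ (fun h => h * x) '' (H : Set G)).ncard :=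
      Set.ncard_le_ncard hsub' (Set.toFinite _)
  _ ≤ (H : Set G).ncard + ((fun h => h * x) '' (H : Set G)).ncard := Set.ncard_union_le _ _
  _ = (H : Set G).ncard + (H : Set G).ncard := by
      rw [Set.ncard_image_of_injective _ (mul_left_injective x)]
  _ = 2 * Nat.card H := by
      have he : (H : Set G).ncard = Nat.card H := (Nat.card_coe_set_eq (H : Set G)).symm
      rw [he, two_mul]


open Subgroup in
theorem stmt_17 {G : Type*} [Group G] [Finite G]
    (P : Subgroup G) (hPn : P.Normal) (n : ℕ) (hn : 1 < n)
    (hcard : Nat.card P = 2 ^ n)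
    (hexp : ∀ x ∈ P, x ^ 2 = 1)
    (d : ℕ) (hd1 : 2 < d) (hd2 : d < 2 ^ (n - 1)) (hdvd : d ∣ 2 ^ n)
    (h : ∀ A : Subgroup G, A ≤ P → Nat.card A = d → IsStrongPCAPSubgroup 2 A) :
    ∀ V U : Subgroup G, IsChiefFactor G V U → U ≤ P → V.relIndex U = 2 := by
  haveI : Fact (Nat.Prime 2) := ⟨Nat.prime_two⟩
  intro V U hCF hUP
  obtain ⟨hVn, hUn, hlt, hmax⟩ := hCF
  have hVU : V ≤ U := hlt.le
  have hVP : V ≤ P := hVU.trans hUP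
  have hcardU : Nat.card U ∣ 2 ^ n := hcard ▸ Subgroup.card_dvd_of_le hUP
  have hrelcard : V.relIndex U * Nat.card V = Nat.card U := by
    have h1 := Subgroup.index_mul_card (G := ↥U) (H := V.subgroupOf U)
    rwa [Nat.card_congr (Subgroup.subgroupOfEquivOfLe hVU).toEquiv] at h1
  have hreldvd : V.relIndex U ∣ 2 ^ n :=
    dvd_trans ⟨Nat.card V, hrelcard.symm⟩ hcardU
  obtain ⟨m, hmn, hm⟩ := (Nat.dvd_prime_pow Nat.prime_two).mp hreldvd
  have hrelne1 : V.relIndex U ≠ 1 := by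
    intro h1
    have : V.subgroupOf U = ⊤ := Subgroup.index_eq_one.mp h1
    refine hlt.ne ?_
    apply le_antisymm hVU
    intro u hu
    have : (⟨u, hu⟩ : ↥U) ∈ V.subgroupOf U := this ▸ Subgroup.mem_top _
    exact this
  have hm0 : m ≠ 0 := by rintro rfl; rw [pow_zero] at hm; exact hrelne1 hm
  rcases Nat.lt_or_ge m 2 with hm2 | hm2
  · interval_cases m
    · exact absurd rfl hm0
    · rw [hm, pow_one]
  exfalso
  -- cards
  have hcVpos : 0 < Nat.card V := Nat.card_pos
  have hcU4 : 4 * Nat.card V ≤ Nat.card U := by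
    rw [← hrelcard, hm]
    have : (4 : ℕ) ≤ 2 ^ m := by
      calc (4:ℕ) = 2 ^ 2 := rfl
      _ ≤ 2 ^ m := Nat.pow_le_pow_right (by norm_num) hm2
    exact Nat.mul_le_mul_right _ this
  obtain ⟨u1, hu1U, hu1V⟩ := SetLike.exists_of_lt hlt
  set Q := V ⊔ Subgroup.zpowers u1 with hQdef
  have hQU : Q ≤ U := sup_le hVU (Subgroup.zpowers_le.mpr hu1U)
  have hQP : Q ≤ P := hQU.trans hUP
  have hcardQ : Nat.card Q ≤ 2 * Nat.card V :=
    aux_card_le_two_mul (fun g hg => aux_mem_or_mem_mul hexp hVP (hUP hu1U) hg)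
  have hQltU : Q < U := by
    refine lt_of_le_of_ne hQU fun hEq => ?_
    have : Nat.card U ≤ 2 * Nat.card V := hEq ▸ hcardQ
    omega
  obtain ⟨u2, hu2U, hu2Q⟩ := SetLike.exists_of_lt hQltU
  -- maximal H
  haveI : Finite (Subgroup G) := Finite.of_injective _ SetLike.coe_injective
  have hQS : Q ∈ {K : Subgroup G | Q ≤ K ∧ K ≤ P ∧ u2 ∉ K} := ⟨le_rfl, hQP, hu2Q⟩
  obtain ⟨H, hHS, hHmax⟩ :=
    Set.Finite.exists_maximalFor (fun K : Subgroup G => Nat.card K)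
      {K : Subgroup G | Q ≤ K ∧ K ≤ P ∧ u2 ∉ K} (Set.toFinite _) ⟨Q, hQS⟩
  obtain ⟨hQH, hHP, hu2H⟩ := hHS
  have hcov : ∀ x ∈ P, x ∈ H ∨ ∃ h ∈ H, x = h * u2 := by
    intro x hxP
    by_cases hxH : x ∈ H
    · exact Or.inl hxH
    have hu2' : u2 ∈ H ⊔ Subgroup.zpowers x := by
      by_contra hcon
      have hS' : H ⊔ Subgroup.zpowers x ∈ {K : Subgroup G | Q ≤ K ∧ K ≤ P ∧ u2 ∉ K} :=
        ⟨hQH.trans le_sup_left, sup_le hHP (Subgroup.zpowers_le.mpr hxP), hcon⟩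
      have hle : Nat.card H ≤ Nat.card ↥(H ⊔ Subgroup.zpowers x) :=
        Subgroup.card_le_of_le le_sup_left
      have hceq := hHmax hS' hle
      have : H = H ⊔ Subgroup.zpowers x :=
        Subgroup.eq_of_le_of_card_ge le_sup_left hceq
      exact hxH (this ▸ Subgroup.mem_sup_right (Subgroup.mem_zpowers x) : x ∈ H)
    rcases aux_mem_or_mem_mul hexp hHP hxP hu2' with h1 | ⟨hh, hhH, heq⟩
    · exact absurd h1 hu2H
    · refine Or.inr ⟨hh⁻¹, H.inv_mem hhH, ?_⟩
      rw [heq]; group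
  have hcardP2 : 2 ^ n ≤ 2 * Nat.card H := by
    rw [← hcard]
    exact aux_card_le_two_mul hcov
  obtain ⟨t, htn, ht⟩ := (Nat.dvd_prime_pow Nat.prime_two).mp
    (hcard ▸ Subgroup.card_dvd_of_le hHP)
  obtain ⟨k, hkn, hk⟩ := (Nat.dvd_prime_pow Nat.prime_two).mp hdvd
  have hk2 : 2 ≤ k := by
    by_contra hcon
    interval_cases k <;> simp_all <;> omega
  have hkt : k ≤ t := by
    have h1 : 2 ^ n ≤ 2 ^ (t + 1) := by
      rw [pow_succ]
      calc 2 ^ n ≤ 2 * Nat.card H := hcardP2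
      _ = 2 ^ t * 2 := by rw [ht]; ring
    have h2 : n ≤ t + 1 := (Nat.pow_le_pow_iff_right (by norm_num)).mp h1
    have h3 : 2 ^ k < 2 ^ (n - 1) := by rw [← hk]; exact hd2
    have h4 : k < n - 1 := (Nat.pow_lt_pow_iff_right (by norm_num)).mp h3
    omega
  -- construct A
  have hu1Q : u1 ∈ Q := Subgroup.mem_sup_right (Subgroup.mem_zpowers u1)
  have hu1H : u1 ∈ H := hQH hu1Q
  have hu1P : u1 ∈ P := hUP hu1U
  have hu1ne : u1 ≠ 1 := fun he => hu1V (he ▸ V.one_mem)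
  have hord : orderOf u1 = 2 := orderOf_eq_prime (hexp u1 hu1P) hu1ne
  have hZle : Subgroup.zpowers u1 ≤ H := Subgroup.zpowers_le.mpr hu1H
  have hcardZ : Nat.card ((Subgroup.zpowers u1).subgroupOf H) = 2 ^ 1 := by
    rw [Nat.card_congr (Subgroup.subgroupOfEquivOfLe hZle).toEquiv, Nat.card_zpowers, hord,
      pow_one]
  obtain ⟨K', hK'card, hK'le⟩ :=
    Sylow.exists_subgroup_card_pow_prime_le (G := ↥H) 2
      (ht ▸ pow_dvd_pow 2 hkt) _ hcardZ (by omega)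
  set A := K'.map H.subtype with hAdef
  have hAH : A ≤ H := Subgroup.map_subtype_le _
  have hAP : A ≤ P := hAH.trans hHP
  have hAcard : Nat.card A = d := by
    rw [hAdef, ← Nat.card_congr (K'.equivMapOfInjective H.subtype
      (Subgroup.subtype_injective H)).toEquiv, hK'card, hk]
  have hu1A : u1 ∈ A := by
    refine ⟨⟨u1, hu1H⟩, hK'le ?_, rfl⟩
    exact Subgroup.mem_zpowers u1
  have hstrong := h A hAP hAcard
  have hcap := hstrong ⊤ le_top
  have hdvd2 : 2 ∣ V.relIndex U := by
    rw [hm]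
    exact dvd_pow_self 2 hm0
  rcases aux_cap_of_top hcap ⟨hVn, hUn, hlt, hmax⟩ hdvd2 with hc | ha
  · have h1 : u2 ∈ A ⊔ U := Subgroup.mem_sup_right hu2U
    rw [hc] at h1
    have h2 : A ⊔ V ≤ H := sup_le hAH ((le_sup_left.trans hQH : V ≤ H))
    exact hu2H (h2 h1)
  · have h1 : u1 ∈ A ⊓ U := ⟨hu1A, hu1U⟩
    rw [ha] at h1
    exact hu1V h1.2
end
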